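/- arXiv:1308.6809 — 9 statements merged into one kernel-verified Lean document; each statement's English description precedes it below -/
import Mathlib

section
/- The lower image D := {t ∈ R^q : w(t) ∈ C^+, t_q ≤ inf_{x∈𝒳} w(t)^T Γ(x)} of the geometric dual problem is a convex set, where w(t) := ((t_1,…,t_{q−1},1) T^{−1})^T for a fixed nonsingular matrix T whose last column is c ∈ int C. -/
open Set Pointwise Matrix

/-- `w(t) := ((t₁,…,t_{q-1},1) T⁻¹)ᵀ`. -/
noncomputable def wfun {q : ℕ} (T : Matrix (Fin (q+1)) (Fin (q+1)) ℝ)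
    (t : Fin (q+1) → ℝ) : Fin (q+1) → ℝ :=
  Matrix.vecMul (Function.update t (Fin.last q) 1) T⁻¹

lemma wfun_combo {q : ℕ} (T : Matrix (Fin (q+1)) (Fin (q+1)) ℝ)
    (t₁ t₂ : Fin (q+1) → ℝ) (a b : ℝ) (hab : a + b = 1) :
    wfun T (a • t₁ + b • t₂) = a • wfun T t₁ + b • wfun T t₂ := by
  have hupd : Function.update (a • t₁ + b • t₂) (Fin.last q) 1
      = a • Function.update t₁ (Fin.last q) 1 + b • Function.update t₂ (Fin.last q) 1 := by
    funext i
    by_cases h : i = Fin.last q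
    · subst h; simp [Function.update_self, hab]
    · simp [Function.update_of_ne h]
  unfold wfun
  rw [hupd, Matrix.add_vecMul, Matrix.smul_vecMul, Matrix.smul_vecMul]

/-- The lower image
`D = {t : w(t) ∈ C⁺, t_q ≤ inf_{x ∈ 𝒳} w(t)ᵀ Γ(x)}` of the geometric dual problem
is a convex set. -/
theorem lower_image_convex {n q : ℕ}
    (C : Set (Fin (q+1) → ℝ))
    (hCconv : Convex ℝ C)
    (hCcone : ∀ x ∈ C, ∀ r : ℝ, 0 ≤ r → r • x ∈ C)
    (hCnontrivial : {(0 : Fin (q+1) → ℝ)} ⊂ C ∧ C ≠ Set.univ)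
    (hCpointed : ∀ x ∈ C, -x ∈ C → x = 0)
    (c : Fin (q+1) → ℝ) (hc : c ∈ interior C)
    (T : Matrix (Fin (q+1)) (Fin (q+1)) ℝ) (hT : IsUnit T.det)
    (hTc : ∀ i, T i (Fin.last q) = c i)
    (𝒳 : Set (Fin n → ℝ)) (h𝒳 : 𝒳.Nonempty)
    (Γ : (Fin n → ℝ) → Fin (q+1) → ℝ) :
    Convex ℝ {t : Fin (q+1) → ℝ |
      (∀ y ∈ C, 0 ≤ wfun T t ⬝ᵥ y) ∧
      ∀ x ∈ 𝒳, t (Fin.last q) ≤ wfun T t ⬝ᵥ Γ x} := by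
  rintro t₁ ⟨h₁C, h₁X⟩ t₂ ⟨h₂C, h₂X⟩ a b ha hb hab
  have hw : wfun T (a • t₁ + b • t₂) = a • wfun T t₁ + b • wfun T t₂ :=
    wfun_combo T t₁ t₂ a b hab
  constructor
  · intro y hy
    rw [hw, add_dotProduct, smul_dotProduct, smul_dotProduct]
    have := h₁C y hy
    have := h₂C y hy
    positivity
  · intro x hx
    rw [hw, add_dotProduct, smul_dotProduct, smul_dotProduct]
    have h1 := h₁X x hx
    have h2 := h₂X x hx
    have : (a • t₁ + b • t₂) (Fin.last q) = a * t₁ (Fin.last q) + b * t₂ (Fin.last q) := by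
      simp
    rw [this]
    have := mul_le_mul_of_nonneg_left h1 ha
    have := mul_le_mul_of_nonneg_left h2 hb
    simp only [smul_eq_mul]
    linarith
end

section
/- Let D̄ ⊆ R^q be a nonempty, closed, convex proper subset with D̄ = D̄ − K and D̄ ≠ D̄ + K, where K = R_+ e^q. Define P̄ := {y ∈ R^q : φ(y, y*) ≥ 0 for all y* ∈ D̄}. Then D̄ = {y* ∈ R^q : φ(y, y*) ≥ 0 for all y ∈ P̄}. -/
open Set Pointwise Matrix

/-- Coupling function `φ(y,y*) := w(y*)ᵀ y − y*_q`. -/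
noncomputable def phi {q : ℕ} (T : Matrix (Fin (q+1)) (Fin (q+1)) ℝ)
    (y ystar : Fin (q+1) → ℝ) : ℝ :=
  wfun T ystar ⬝ᵥ y - ystar (Fin.last q)

/-- The ordering cone `K = ℝ₊ e^q` of the geometric dual problem. -/
def Kcone (q : ℕ) : Set (Fin (q+1) → ℝ) :=
  {k | ∃ r : ℝ, 0 ≤ r ∧ k = r • (Pi.single (Fin.last q) (1 : ℝ) : Fin (q+1) → ℝ)}

/-- A continuous linear functional on `Fin n → ℝ` is determined by its values on
the standard basis. -/
lemma lin_sum {n : ℕ} (f : (Fin n → ℝ) →L[ℝ] ℝ) (y : Fin n → ℝ) :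
    f y = ∑ i, y i * f (Pi.single i 1) := by
  conv_lhs => rw [← Finset.univ_sum_single y]
  rw [map_sum]
  refine Finset.sum_congr rfl fun i _ => ?_
  have h : (Pi.single i (y i) : Fin n → ℝ) = y i • (Pi.single i 1 : Fin n → ℝ) := by
    ext j
    rcases eq_or_ne j i with rfl | hj
    · simp
    · simp [Pi.single_eq_of_ne hj]
  rw [h, f.map_smul, smul_eq_mul]

/-- Evaluating `phi` along a change of variables `y = T z`. -/
lemma phi_mulVec {q : ℕ} (T : Matrix (Fin (q+1)) (Fin (q+1)) ℝ) (hT : IsUnit T.det)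
    (z ys : Fin (q+1) → ℝ) :
    phi T (T *ᵥ z) ys =
      (∑ i : Fin q, ys i.castSucc * z i.castSucc) + z (Fin.last q) - ys (Fin.last q) := by
  unfold phi wfun
  rw [Matrix.dotProduct_mulVec, Matrix.vecMul_vecMul, Matrix.nonsing_inv_mul T hT,
    Matrix.vecMul_one, dotProduct, Fin.sum_univ_castSucc]
  simp [Function.update_apply, (Fin.castSucc_lt_last _).ne]

/-- Duality relation: if `D̄` is a nonempty closed convex proper subset with
`D̄ = D̄ − K` and `D̄ ≠ D̄ + K`, and `P̄ := {y : ∀ y* ∈ D̄, φ(y,y*) ≥ 0}`, then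
`D̄ = {y* : ∀ y ∈ P̄, φ(y,y*) ≥ 0}`. -/
theorem duality_relation_of_lower_set {q : ℕ}
    (T : Matrix (Fin (q+1)) (Fin (q+1)) ℝ) (hT : IsUnit T.det)
    (D : Set (Fin (q+1) → ℝ))
    (hDne : D.Nonempty) (hDcl : IsClosed D) (hDconv : Convex ℝ D)
    (hDproper : D ≠ Set.univ)
    (hDK : D = D - Kcone q) (hDK' : D ≠ D + Kcone q) :
    D = {ystar | ∀ y ∈ {y' : Fin (q+1) → ℝ | ∀ ys ∈ D, 0 ≤ phi T y' ys},
      0 ≤ phi T y ystar} := by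
  classical
  set e : Fin (q+1) → ℝ := Pi.single (Fin.last q) (1:ℝ) with he
  -- D is a lower set in the last coordinate
  have hdown : ∀ a ∈ D, ∀ m : ℝ, 0 ≤ m → a - m • e ∈ D := by
    intro a ha m hm
    rw [hDK]
    exact Set.sub_mem_sub ha ⟨m, hm, rfl⟩
  -- every functional bounded above on D has nonnegative last component
  have hnonneg : ∀ (f : (Fin (q+1) → ℝ) →L[ℝ] ℝ) (u : ℝ),
      (∀ a ∈ D, f a < u) → 0 ≤ f e := by
    intro f u hf
    by_contra hneg
    push_neg at hneg
    obtain ⟨a, ha⟩ := hDne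
    have hau : f a < u := hf a ha
    set m : ℝ := (u - f a) / (-(f e)) with hm
    have hm0 : 0 ≤ m := div_nonneg (by linarith) (by linarith)
    have h2 := hf _ (hdown a ha m hm0)
    rw [map_sub, f.map_smul, smul_eq_mul] at h2
    have hfe : f e ≠ 0 := by linarith
    have : m * f e = -(u - f a) := by
      rw [hm, div_mul_eq_mul_div, div_neg, mul_div_assoc, div_self hfe, mul_one]
    linarith
  -- a functional with strictly positive last component bounded above on D
  obtain ⟨p, hpDK, hpD⟩ : ∃ p ∈ D + Kcone q, p ∉ D := by
    have hsub : D ⊆ D + Kcone q := fun d hd =>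
      ⟨d, hd, 0, ⟨0, le_rfl, by simp⟩, add_zero d⟩
    exact Set.exists_of_ssubset (hsub.ssubset_of_ne hDK')
  obtain ⟨d₀, hd₀, k, ⟨r, hr, rfl⟩, rfl⟩ := hpDK
  obtain ⟨g, γ, hg, hγ⟩ := geometric_hahn_banach_closed_point hDconv hDcl hpD
  have hge : 0 < g e := by
    have h1 : g d₀ < γ := hg d₀ hd₀
    rw [map_add, g.map_smul, smul_eq_mul] at hγ
    have hr0 : r ≠ 0 := by
      rintro rfl
      simp only [zero_smul, add_zero] at hpD
      exact hpD hd₀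
    have hrpos : 0 < r := lt_of_le_of_ne hr (Ne.symm hr0)
    nlinarith
  -- prove the set equality
  apply Set.Subset.antisymm
  · intro ystar hys y hy
    exact hy ystar hys
  · intro ystar hmem
    by_contra hDys
    obtain ⟨f, u, hf, hu⟩ := geometric_hahn_banach_closed_point hDconv hDcl hDys
    have hfe : 0 ≤ f e := hnonneg f u hf
    set ε : ℝ := f ystar - u with hε
    have hεpos : 0 < ε := by simp [hε]; linarith
    set M : ℝ := max 1 (γ - g ystar) with hM
    have hMpos : 0 < M := lt_of_lt_of_le one_pos (le_max_left _ _)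
    set β : ℝ := ε / (2 * M) with hβ
    have hβpos : 0 < β := div_pos hεpos (by linarith)
    set F : (Fin (q+1) → ℝ) →L[ℝ] ℝ := f + β • g with hF
    set c : ℝ := F e with hc
    have hcpos : 0 < c := by
      have : F e = f e + β * g e := by simp [hF]
      rw [hc, this]
      nlinarith
    set v : ℝ := u + β * γ with hv
    have hFD : ∀ a ∈ D, F a < v := by
      intro a ha
      have h1 : f a < u := hf a ha
      have h2 : g a < γ := hg a ha
      have : F a = f a + β * g a := by simp [hF]
      rw [this, hv]
      nlinarith
    have hFy : v < F ystar := by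
      have h3 : β * (γ - g ystar) ≤ β * M := by
        apply mul_le_mul_of_nonneg_left (le_max_right _ _) hβpos.le
      have h4 : β * M = ε / 2 := by
        rw [hβ]; field_simp
      have : F ystar = f ystar + β * g ystar := by simp [hF]
      rw [hv, this]
      nlinarith
    -- construct the element of P̄ witnessing exclusion
    set z : Fin (q+1) → ℝ :=
      fun i => if i = Fin.last q then v / c else -(F (Pi.single i 1)) / c with hz
    have hz1 : z (Fin.last q) = v / c := if_pos rfl
    have hz2 : ∀ i : Fin q, z i.castSucc = -(F (Pi.single i.castSucc 1)) / c :=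
      fun i => if_neg (Fin.castSucc_lt_last i).ne
    have hcne : c ≠ 0 := hcpos.ne'
    have hFys : ∀ ys : Fin (q+1) → ℝ,
        F ys = (∑ i : Fin q, ys i.castSucc * F (Pi.single i.castSucc 1))
          + ys (Fin.last q) * c := by
      intro ys
      rw [lin_sum F ys, Fin.sum_univ_castSucc]
    have key : ∀ ys : Fin (q+1) → ℝ, phi T (T *ᵥ z) ys = (v - F ys) / c := by
      intro ys
      rw [phi_mulVec T hT, hFys ys, hz1]
      have hterm : ∀ i : Fin q, ys i.castSucc * z i.castSucc
          = -(ys i.castSucc * F (Pi.single i.castSucc 1)) / c := by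
        intro i; rw [hz2 i]; ring
      simp only [hterm]
      rw [← Finset.sum_div]
      field_simp
      rw [Finset.sum_neg_distrib]
      ring
    have hyP : (T *ᵥ z) ∈ {y' : Fin (q+1) → ℝ | ∀ ys ∈ D, 0 ≤ phi T y' ys} := by
      intro ys hys
      rw [key ys]
      exact div_nonneg (by linarith [hFD ys hys]) hcpos.le
    have := hmem _ hyP
    rw [key ystar] at this
    have hneg : (v - F ystar) / c < 0 :=
      div_neg_of_neg_of_pos (by linarith) hcpos
    linarith
end

section
/- For the upper image P = cl(Γ(𝒳) + C) and lower image D = {t ∈ R^q : w(t) ∈ C^+, t_q ≤ inf_{x∈𝒳} w(t)^T Γ(x)}, weak duality holds: for all y ∈ P and y* ∈ D, φ(y, y*) ≥ 0. -/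
open Set Pointwise Matrix

/-- Weak duality: for every `y` in the upper image `P = cl(Γ(𝒳) + C)` and every
`y*` in the lower image `D`, one has `φ(y, y*) ≥ 0`. -/
theorem weak_duality {n q : ℕ}
    (C : Set (Fin (q+1) → ℝ))
    (hCconv : Convex ℝ C)
    (hCcone : ∀ x ∈ C, ∀ r : ℝ, 0 ≤ r → r • x ∈ C)
    (hCnontrivial : {(0 : Fin (q+1) → ℝ)} ⊂ C ∧ C ≠ Set.univ)
    (hCpointed : ∀ x ∈ C, -x ∈ C → x = 0)
    (c : Fin (q+1) → ℝ) (hc : c ∈ interior C)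
    (T : Matrix (Fin (q+1)) (Fin (q+1)) ℝ) (hT : IsUnit T.det)
    (hTc : ∀ i, T i (Fin.last q) = c i)
    (𝒳 : Set (Fin n → ℝ)) (h𝒳 : 𝒳.Nonempty)
    (Γ : (Fin n → ℝ) → Fin (q+1) → ℝ)
    (y : Fin (q+1) → ℝ) (hy : y ∈ closure (Γ '' 𝒳 + C))
    (ystar : Fin (q+1) → ℝ)
    (hystar : (∀ k ∈ C, 0 ≤ wfun T ystar ⬝ᵥ k) ∧
      ∀ x ∈ 𝒳, ystar (Fin.last q) ≤ wfun T ystar ⬝ᵥ Γ x) :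
    0 ≤ phi T y ystar := by
  obtain ⟨hC0, h𝒳0⟩ := hystar
  set w := wfun T ystar with hw
  have hcont : Continuous fun z : Fin (q+1) → ℝ => w ⬝ᵥ z := by
    unfold dotProduct
    exact continuous_finset_sum _ fun i _ =>
      (continuous_const.mul (continuous_apply i))
  have hclosed : IsClosed {z : Fin (q+1) → ℝ | ystar (Fin.last q) ≤ w ⬝ᵥ z} :=
    isClosed_le continuous_const hcont
  have hsub : Γ '' 𝒳 + C ⊆ {z | ystar (Fin.last q) ≤ w ⬝ᵥ z} := by
    rintro z ⟨g, ⟨x, hx, rfl⟩, k, hk, rfl⟩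
    have h1 := h𝒳0 x hx
    have h2 := hC0 k hk
    simp only [Set.mem_setOf_eq, dotProduct_add]
    linarith
  have := closure_minimal hsub hclosed hy
  simp only [Set.mem_setOf_eq] at this
  simp only [phi]
  linarith
end

section
/- Strong geometric duality: the lower image D satisfies D = {y* ∈ R^q : φ(y, y*) ≥ 0 for all y ∈ P}, where P = cl(Γ(𝒳) + C) is the upper image. -/
open Set Pointwise Matrix

/-- Strong geometric duality: the lower image `D` coincides with
`{y* : ∀ y ∈ P, φ(y,y*) ≥ 0}` where `P = cl(Γ(𝒳) + C)` is the upper image. -/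
theorem strong_geometric_duality {n q : ℕ}
    (C : Set (Fin (q+1) → ℝ))
    (hCconv : Convex ℝ C)
    (hCcone : ∀ x ∈ C, ∀ r : ℝ, 0 ≤ r → r • x ∈ C)
    (hCnontrivial : {(0 : Fin (q+1) → ℝ)} ⊂ C ∧ C ≠ Set.univ)
    (hCpointed : ∀ x ∈ C, -x ∈ C → x = 0)
    (c : Fin (q+1) → ℝ) (hc : c ∈ interior C)
    (T : Matrix (Fin (q+1)) (Fin (q+1)) ℝ) (hT : IsUnit T.det)
    (hTc : ∀ i, T i (Fin.last q) = c i)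
    (𝒳 : Set (Fin n → ℝ)) (h𝒳 : 𝒳.Nonempty)
    (Γ : (Fin n → ℝ) → Fin (q+1) → ℝ) :
    {t : Fin (q+1) → ℝ | (∀ k ∈ C, 0 ≤ wfun T t ⬝ᵥ k) ∧
        ∀ x ∈ 𝒳, t (Fin.last q) ≤ wfun T t ⬝ᵥ Γ x}
      = {ystar | ∀ y ∈ closure (Γ '' 𝒳 + C), 0 ≤ phi T y ystar} := by
  ext t
  simp only [Set.mem_setOf_eq]
  constructor
  · rintro ⟨h1, h2⟩ y hy
    have hcont : Continuous fun y : Fin (q+1) → ℝ => phi T y t := by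
      unfold phi dotProduct
      exact (continuous_finset_sum _ fun i _ =>
        (continuous_const.mul (continuous_apply i))).sub continuous_const
    have hclosed : IsClosed {y : Fin (q+1) → ℝ | 0 ≤ phi T y t} :=
      isClosed_le continuous_const hcont
    have hsub : Γ '' 𝒳 + C ⊆ {y : Fin (q+1) → ℝ | 0 ≤ phi T y t} := by
      rintro _ ⟨_, ⟨x, hx, rfl⟩, k, hk, rfl⟩
      have := h2 x hx
      have := h1 k hk
      simp only [Set.mem_setOf_eq, phi, dotProduct_add]
      linarith
    exact closure_minimal hsub hclosed hy
  · intro h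
    obtain ⟨x0, hx0⟩ := h𝒳
    have hmem : ∀ x ∈ 𝒳, ∀ k ∈ C, 0 ≤ phi T (Γ x + k) t := fun x hx k hk =>
      h _ (subset_closure (Set.add_mem_add ⟨x, hx, rfl⟩ hk))
    have h0C : (0 : Fin (q+1) → ℝ) ∈ C := hCnontrivial.1.1 rfl
    constructor
    · intro k hk
      by_contra hneg
      push_neg at hneg
      set w := wfun T t ⬝ᵥ k with hw
      set a := t (Fin.last q) - wfun T t ⬝ᵥ Γ x0 with ha
      have key : ∀ r : ℝ, 0 ≤ r → a ≤ r * w := by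
        intro r hr
        have := hmem x0 hx0 (r • k) (hCcone k hk r hr)
        simp only [phi, dotProduct_add, dotProduct_smul,
          smul_eq_mul] at this
        rw [ha, hw]
        linarith
      have hr2 : a / w + 1 ≤ max 0 (a / w + 1) := le_max_right _ _
      have hkey := key (max 0 (a / w + 1)) (le_max_left _ _)
      have hmul : max 0 (a / w + 1) * w ≤ (a / w + 1) * w :=
        mul_le_mul_of_nonpos_right hr2 hneg.le
      have heq : (a / w + 1) * w = a + w := by
        rw [add_mul, one_mul, div_mul_cancel₀ a hneg.ne]
      linarith
    · intro x hx
      have h3 := hmem x hx 0 h0C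
      simp only [phi, add_zero] at h3
      linarith
end

section
/- Let t ∈ T := {t ∈ R^q : w(t) ∈ C^+} and set w := w(t). If inf_{x∈𝒳} w^T Γ(x) =: y^w is finite, then D*(t) := (t_1,…,t_{q−1}, y^w)^T is a K-maximal element of the lower image D, where K = R_+ e^q; i.e., ({D*(t)} + K \ {0}) ∩ D = ∅. -/
open Set Pointwise Matrix

lemma wfun_eq_of_agree {q : ℕ} (T : Matrix (Fin (q+1)) (Fin (q+1)) ℝ)
    {s t : Fin (q+1) → ℝ} (h : ∀ i, i ≠ Fin.last q → s i = t i) :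
    wfun T s = wfun T t := by
  unfold wfun
  have : Function.update s (Fin.last q) 1 = Function.update t (Fin.last q) 1 := by
    funext i
    by_cases hi : i = Fin.last q
    · subst hi; simp
    · simp [Function.update_of_ne hi, h i hi]
  rw [this]

/-- If `t` is dual feasible (`w(t) ∈ C⁺`) and `y^w := inf_{x∈𝒳} w(t)ᵀΓ(x)` is finite,
then `D*(t) := (t₁,…,t_{q-1}, y^w)ᵀ` is a `K`-maximal element of the lower image `D`. -/
theorem dual_objective_K_maximal {n q : ℕ}
    (C : Set (Fin (q+1) → ℝ))
    (T : Matrix (Fin (q+1)) (Fin (q+1)) ℝ) (hT : IsUnit T.det)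
    (𝒳 : Set (Fin n → ℝ)) (h𝒳 : 𝒳.Nonempty)
    (Γ : (Fin n → ℝ) → Fin (q+1) → ℝ)
    (t : Fin (q+1) → ℝ)
    (ht : ∀ k ∈ C, 0 ≤ wfun T t ⬝ᵥ k)
    (yw : ℝ) (hyw : IsGLB {r : ℝ | ∃ x ∈ 𝒳, r = wfun T t ⬝ᵥ Γ x} yw) :
    Function.update t (Fin.last q) yw ∈
      {s : Fin (q+1) → ℝ | (∀ k ∈ C, 0 ≤ wfun T s ⬝ᵥ k) ∧
        ∀ x ∈ 𝒳, s (Fin.last q) ≤ wfun T s ⬝ᵥ Γ x} ∧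
    ({Function.update t (Fin.last q) yw} + (Kcone q \ {0})) ∩
      {s : Fin (q+1) → ℝ | (∀ k ∈ C, 0 ≤ wfun T s ⬝ᵥ k) ∧
        ∀ x ∈ 𝒳, s (Fin.last q) ≤ wfun T s ⬝ᵥ Γ x} = ∅ := by
  have hwf : wfun T (Function.update t (Fin.last q) yw) = wfun T t :=
    wfun_eq_of_agree T (fun i hi => Function.update_of_ne hi _ _)
  constructor
  · constructor
    · intro k hk; rw [hwf]; exact ht k hk
    · intro x hx
      rw [hwf, Function.update_self]
      exact hyw.1 ⟨x, hx, rfl⟩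
  · ext s
    simp only [Set.mem_inter_iff, Set.mem_empty_iff_false, iff_false]
    rintro ⟨hs1, hs2⟩
    obtain ⟨a, ha, k, ⟨⟨r, hr, rfl⟩, hk0⟩, rfl⟩ := hs1
    simp only [Set.mem_singleton_iff] at ha; subst ha
    have hrpos : 0 < r := by
      rcases hr.lt_or_eq with h | h
      · exact h
      · exfalso; apply hk0; simp [← h]
    have hwf2 : wfun T (Function.update t (Fin.last q) yw
        + r • (Pi.single (Fin.last q) (1 : ℝ) : Fin (q+1) → ℝ)) = wfun T t := by
      refine wfun_eq_of_agree T (fun i hi => ?_)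
      simp [Function.update_of_ne hi, Pi.single_eq_of_ne hi]
    have hlb : yw + r ∈ lowerBounds {r : ℝ | ∃ x ∈ 𝒳, r = wfun T t ⬝ᵥ Γ x} := by
      rintro v ⟨x, hx, rfl⟩
      have := hs2.2 x hx
      rw [hwf2] at this
      simpa [Pi.add_apply, Function.update_self] using this
    have := hyw.2 hlb
    linarith
end

section
/- Let Γ: X → R^q be continuous, X compact, C polyhedral cone with generating matrix Z for C^+ and c ∈ int C. For v ∈ R^q, let (x^v, z^v) be an optimal solution of the scalar problem min{z ∈ R : x ∈ 𝒳, Z^T(Γ(x) − z c − v) ≤ 0}. Then x^v is a weak minimizer of (P): ({Γ(x^v)} − int C) ∩ Γ(𝒳) = ∅. -/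
open Set Pointwise Matrix

/-- An optimal solution `(x^v, z^v)` of the scalar problem (P₂(v)),
`min{z : x ∈ 𝒳, Zᵀ(Γ(x) − z c − v) ≤ 0}`,
yields a weak minimizer `x^v` of the convex vector optimization problem. -/
theorem P2_solution_weak_minimizer {n q J : ℕ}
    (C : Set (Fin q → ℝ))
    (Z : Matrix (Fin q) (Fin J) ℝ)
    (hC : C = {y : Fin q → ℝ | ∀ j, 0 ≤ (Zᵀ *ᵥ y) j})
    (c : Fin q → ℝ) (hc : c ∈ interior C)
    (𝒳 : Set (Fin n → ℝ)) (h𝒳compact : IsCompact 𝒳)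
    (Γ : (Fin n → ℝ) → Fin q → ℝ) (hΓ : ContinuousOn Γ 𝒳)
    (v : Fin q → ℝ) (xv : Fin n → ℝ) (zv : ℝ)
    (hfeas : xv ∈ 𝒳 ∧ ∀ j, (Zᵀ *ᵥ (Γ xv - zv • c - v)) j ≤ 0)
    (hopt : ∀ x ∈ 𝒳, ∀ z : ℝ, (∀ j, (Zᵀ *ᵥ (Γ x - z • c - v)) j ≤ 0) → zv ≤ z) :
    ({Γ xv} - interior C) ∩ (Γ '' 𝒳) = ∅ := by
  rw [Set.eq_empty_iff_forall_notMem]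
  rintro y ⟨hy1, xbar, hxbar, rfl⟩
  rw [Set.mem_sub] at hy1
  obtain ⟨a, ha, d, hd, had⟩ := hy1
  rw [Set.mem_singleton_iff] at ha
  subst ha
  -- find ε > 0 with d - ε • c ∈ C
  have hcont : Continuous (fun t : ℝ => d - t • c) := by continuity
  have hopen : IsOpen ((fun t : ℝ => d - t • c) ⁻¹' interior C) :=
    isOpen_interior.preimage hcont
  have h0 : (0 : ℝ) ∈ (fun t : ℝ => d - t • c) ⁻¹' interior C := by
    simpa using hd
  obtain ⟨ε, hε, hball⟩ := Metric.isOpen_iff.mp hopen 0 h0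
  set ε' : ℝ := ε / 2 with hε'def
  have hε' : 0 < ε' := by positivity
  have hmem : d - ε' • c ∈ interior C := by
    apply hball
    simp only [Metric.mem_ball, Real.dist_eq, sub_zero]
    rw [abs_of_pos hε']
    linarith
  have hmemC : d - ε' • c ∈ C := interior_subset hmem
  rw [hC] at hmemC
  -- feasibility of (xbar, zv - ε')
  have hfeas2 : ∀ j, (Zᵀ *ᵥ (Γ xbar - (zv - ε') • c - v)) j ≤ 0 := by
    intro j
    have hrw : Γ xbar - (zv - ε') • c - v
        = (Γ xv - zv • c - v) - (d - ε' • c) := by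
      rw [← had]
      module
    rw [hrw, Matrix.mulVec_sub]
    have h1 := hfeas.2 j
    have h2 := hmemC j
    simp only [Pi.sub_apply]
    linarith
  have := hopt xbar hxbar (zv - ε') hfeas2
  linarith
end

section
/- With notation as in (P_2(v)): v is a weakly C-minimal element of the upper image P = Γ(𝒳) + C if and only if the optimal value z^v of min{z : x ∈ 𝒳, Γ(x) − zc − v ∈ −C} equals 0. -/
open Set Pointwise Matrix

/-- `v` is a weakly `C`-minimal element of the upper image `P = Γ(𝒳) + C` if and only
if the optimal value `z^v` of (P₂(v)): `min{z : x ∈ 𝒳, Γ(x) − z c − v ∈ −C}` is zero. -/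
theorem weakly_minimal_iff_P2_value_zero {n q : ℕ}
    (C : Set (Fin q → ℝ))
    (hCconv : Convex ℝ C)
    (hCcone : ∀ x ∈ C, ∀ r : ℝ, 0 ≤ r → r • x ∈ C)
    (hCnontrivial : {(0 : Fin q → ℝ)} ⊂ C ∧ C ≠ Set.univ)
    (hCpointed : ∀ x ∈ C, -x ∈ C → x = 0)
    (hCclosed : IsClosed C)
    (c : Fin q → ℝ) (hc : c ∈ interior C)
    (𝒳 : Set (Fin n → ℝ)) (h𝒳compact : IsCompact 𝒳)
    (Γ : (Fin n → ℝ) → Fin q → ℝ) (hΓ : ContinuousOn Γ 𝒳)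
    (v : Fin q → ℝ) (xv : Fin n → ℝ) (zv : ℝ)
    (hfeas : xv ∈ 𝒳 ∧ Γ xv - zv • c - v ∈ -C)
    (hopt : ∀ x ∈ 𝒳, ∀ z : ℝ, Γ x - z • c - v ∈ -C → zv ≤ z) :
    (v ∈ Γ '' 𝒳 + C ∧ ({v} - interior C) ∩ (Γ '' 𝒳 + C) = ∅) ↔ zv = 0 := by
  obtain ⟨hxv, hfeasC⟩ := hfeas
  have hadd : ∀ a ∈ C, ∀ b ∈ C, a + b ∈ C := by
    intro a ha b hb
    have hmid : (1/2 : ℝ) • a + (1/2 : ℝ) • b ∈ C :=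
      hCconv ha hb (by norm_num) (by norm_num) (by norm_num)
    have h2 := hCcone _ hmid 2 (by norm_num)
    have : (2:ℝ) • ((1/2 : ℝ) • a + (1/2 : ℝ) • b) = a + b := by
      rw [smul_add, smul_smul, smul_smul]; norm_num
    rwa [this] at h2
  have hsmul_int : ∀ r : ℝ, 0 < r → r • c ∈ interior C := by
    intro r hr
    have hC_eq : r • C = C := by
      apply subset_antisymm
      · rintro _ ⟨x, hx, rfl⟩; exact hCcone x hx r hr.le
      · intro x hx
        exact ⟨r⁻¹ • x, hCcone x hx r⁻¹ (by positivity),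
          by show r • r⁻¹ • x = x; rw [smul_smul, mul_inv_cancel₀ hr.ne', one_smul]⟩
    have h := interior_smul₀ (α := Fin q → ℝ) hr.ne' C
    rw [hC_eq] at h
    rw [h]
    exact ⟨c, hc, rfl⟩
  constructor
  · rintro ⟨hvP, hmin⟩
    rw [Set.mem_add] at hvP
    obtain ⟨a, ⟨x, hx, rfl⟩, k, hk, hv⟩ := hvP
    have hle : zv ≤ 0 := by
      apply hopt x hx 0
      rw [Set.mem_neg]
      have : -(Γ x - (0:ℝ) • c - v) = k := by
        rw [← hv, zero_smul]; abel
      rwa [this]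
    rcases lt_or_eq_of_le hle with hlt | heq
    · exfalso
      set w := v + zv • c with hw
      have hwP : w ∈ Γ '' 𝒳 + C := by
        rw [Set.mem_add]
        exact ⟨Γ xv, ⟨xv, hxv, rfl⟩, -(Γ xv - zv • c - v), Set.mem_neg.mp hfeasC, by rw [hw]; abel⟩
      have hwS : w ∈ ({v} - interior C) := by
        rw [Set.mem_sub]
        refine ⟨v, rfl, (-zv) • c, hsmul_int (-zv) (by linarith), ?_⟩
        rw [hw, neg_smul]; abel
      have : w ∈ (({v} - interior C) ∩ (Γ '' 𝒳 + C)) := ⟨hwS, hwP⟩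
      rw [hmin] at this
      exact this
    · exact heq
  · intro hz
    subst hz
    have hvC : v - Γ xv ∈ C := by
      rw [Set.mem_neg] at hfeasC
      have : -(Γ xv - (0:ℝ) • c - v) = v - Γ xv := by rw [zero_smul]; abel
      rwa [this] at hfeasC
    constructor
    · rw [Set.mem_add]
      exact ⟨Γ xv, ⟨xv, hxv, rfl⟩, v - Γ xv, hvC, by abel⟩
    · rw [Set.eq_empty_iff_forall_notMem]
      rintro w ⟨hwS, hwP⟩
      rw [Set.mem_sub] at hwS
      obtain ⟨a, ha, d, hd, hwd⟩ := hwS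
      rw [Set.mem_singleton_iff] at ha; rw [ha] at hwd
      rw [Set.mem_add] at hwP
      obtain ⟨g, ⟨x, hx, rfl⟩, k, hk, hwk⟩ := hwP
      -- find small t > 0 with d - t • c ∈ C
      have hcont : Continuous (fun t : ℝ => d - t • c) := by continuity
      have hpre : IsOpen ((fun t : ℝ => d - t • c) ⁻¹' interior C) :=
        isOpen_interior.preimage hcont
      have h0 : (0:ℝ) ∈ ((fun t : ℝ => d - t • c) ⁻¹' interior C) := by
        simpa using hd
      obtain ⟨ε, hε, hball⟩ := Metric.isOpen_iff.mp hpre 0 h0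
      set t := ε / 2 with ht
      have htpos : 0 < t := by positivity
      have htmem : d - t • c ∈ interior C := by
        apply hball
        rw [Metric.mem_ball, Real.dist_eq, sub_zero, abs_of_pos htpos]
        linarith
      have hfeast : Γ x - (-t) • c - v ∈ -C := by
        rw [Set.mem_neg]
        have h1 : Γ x + k = v - d := hwk.trans hwd.symm
        have hgx : Γ x = v - d - k := by rw [← h1]; abel
        have hE : -(Γ x - (-t) • c - v) = k + (d - t • c) := by
          rw [hgx, neg_smul]; abel
        rw [hE]
        exact hadd k hk _ (interior_subset htmem)
      have := hopt x hx (-t) hfeast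
      linarith
end

section
/- Let 𝒳̄ ⊆ 𝒳 be a finite weak ε-solution of (P), i.e., conv Γ(𝒳̄) + C − ε{c} ⊇ P and every element of 𝒳̄ is a weak minimizer. Define P_ε := conv Γ(𝒳̄) + C − ε{c} and D_ε := {y* ∈ R^q : φ(y, y*) ≥ 0 for all y ∈ P_ε}. Then D_ε + ε{e^q} ⊇ D ⊇ D_ε, where D is the lower image of the geometric dual. -/
open Set Pointwise Matrix

lemma wfun_sub_single {q : ℕ} (T : Matrix (Fin (q+1)) (Fin (q+1)) ℝ)
    (t : Fin (q+1) → ℝ) (ε : ℝ) :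
    wfun T (t - ε • (Pi.single (Fin.last q) (1:ℝ) : Fin (q+1) → ℝ)) = wfun T t := by
  unfold wfun
  have h : Function.update (t - ε • (Pi.single (Fin.last q) (1:ℝ) : Fin (q+1) → ℝ))
      (Fin.last q) 1 = Function.update t (Fin.last q) 1 := by
    funext i
    by_cases h : i = Fin.last q
    · subst h; rw [Function.update_self, Function.update_self]
    · rw [Function.update_of_ne h, Function.update_of_ne h]
      simp [Pi.single_eq_of_ne h]
  rw [h]

lemma wfun_dot_c {q : ℕ} (T : Matrix (Fin (q+1)) (Fin (q+1)) ℝ) (hT : IsUnit T.det)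
    (c : Fin (q+1) → ℝ) (hTc : ∀ i, T i (Fin.last q) = c i) (t : Fin (q+1) → ℝ) :
    wfun T t ⬝ᵥ c = 1 := by
  have hc : c = T *ᵥ Pi.single (Fin.last q) 1 := by
    funext i
    simp [Matrix.mulVec_single, hTc i]
  rw [hc, wfun, Matrix.dotProduct_mulVec, Matrix.vecMul_vecMul,
    Matrix.nonsing_inv_mul T hT, Matrix.vecMul_one, dotProduct_single]
  simp

/-- A finite weak `ε`-solution of (P) yields, via `D_ε := {y* : φ(·,y*) ≥ 0 on P_ε}`
with `P_ε := conv Γ(𝒳̄) + C − ε{c}`, an inner `ε`-approximation of the lower image: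
`D_ε + ε{e^q} ⊇ D ⊇ D_ε`. -/
theorem eps_solution_gives_dual_approximation {n q : ℕ}
    (C : Set (Fin (q+1) → ℝ))
    (hCconv : Convex ℝ C)
    (hCcone : ∀ x ∈ C, ∀ r : ℝ, 0 ≤ r → r • x ∈ C)
    (hCnontrivial : {(0 : Fin (q+1) → ℝ)} ⊂ C ∧ C ≠ Set.univ)
    (hCpointed : ∀ x ∈ C, -x ∈ C → x = 0)
    (c : Fin (q+1) → ℝ) (hc : c ∈ interior C)
    (T : Matrix (Fin (q+1)) (Fin (q+1)) ℝ) (hT : IsUnit T.det)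
    (hTc : ∀ i, T i (Fin.last q) = c i)
    (𝒳 : Set (Fin n → ℝ)) (h𝒳 : 𝒳.Nonempty)
    (Γ : (Fin n → ℝ) → Fin (q+1) → ℝ)
    (hPconv : Convex ℝ (Γ '' 𝒳 + C))
    (ε : ℝ) (hε : 0 < ε)
    (Xbar : Finset (Fin n → ℝ)) (hXbar_ne : Xbar.Nonempty)
    (hXbar_sub : (↑Xbar : Set (Fin n → ℝ)) ⊆ 𝒳)
    (hXbar_weakmin : ∀ x ∈ Xbar, ({Γ x} - interior C) ∩ (Γ '' 𝒳) = ∅)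
    (hcover : Γ '' 𝒳 + C ⊆
      convexHull ℝ (Γ '' (↑Xbar : Set (Fin n → ℝ))) + C - ({ε • c} : Set (Fin (q+1) → ℝ))) :
    {t : Fin (q+1) → ℝ | (∀ k ∈ C, 0 ≤ wfun T t ⬝ᵥ k) ∧
        ∀ x ∈ 𝒳, t (Fin.last q) ≤ wfun T t ⬝ᵥ Γ x} ⊆
      {ystar | ∀ y ∈ convexHull ℝ (Γ '' (↑Xbar : Set (Fin n → ℝ))) + C
          - ({ε • c} : Set (Fin (q+1) → ℝ)), 0 ≤ phi T y ystar}
        + ({ε • (Pi.single (Fin.last q) (1:ℝ) : Fin (q+1) → ℝ)} : Set (Fin (q+1) → ℝ)) ∧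
    {ystar : Fin (q+1) → ℝ | ∀ y ∈ convexHull ℝ (Γ '' (↑Xbar : Set (Fin n → ℝ))) + C
          - ({ε • c} : Set (Fin (q+1) → ℝ)), 0 ≤ phi T y ystar} ⊆
      {t : Fin (q+1) → ℝ | (∀ k ∈ C, 0 ≤ wfun T t ⬝ᵥ k) ∧
        ∀ x ∈ 𝒳, t (Fin.last q) ≤ wfun T t ⬝ᵥ Γ x} := by
  have h0C : (0 : Fin (q+1) → ℝ) ∈ C := hCnontrivial.1.1 rfl
  constructor
  · -- D ⊆ D_ε + ε e^q
    intro t ht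
    obtain ⟨ht1, ht2⟩ := ht
    rw [Set.mem_add]
    refine ⟨t - ε • (Pi.single (Fin.last q) (1:ℝ) : Fin (q+1) → ℝ), ?_,
      ε • (Pi.single (Fin.last q) (1:ℝ) : Fin (q+1) → ℝ), rfl, by abel⟩
    -- show membership in D_ε
    have hhull : convexHull ℝ (Γ '' (↑Xbar : Set (Fin n → ℝ)))
        ⊆ {y : Fin (q+1) → ℝ | t (Fin.last q) ≤ wfun T t ⬝ᵥ y} := by
      apply convexHull_min
      · rintro y ⟨x, hx, rfl⟩
        exact ht2 x (hXbar_sub hx)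
      · intro y1 h1 y2 h2 a b ha hb hab
        simp only [Set.mem_setOf_eq] at h1 h2 ⊢
        rw [dotProduct_add, dotProduct_smul, dotProduct_smul]
        have : t (Fin.last q) = a * t (Fin.last q) + b * t (Fin.last q) := by
          rw [← add_mul, hab, one_mul]
        rw [this]
        exact add_le_add (by simpa using mul_le_mul_of_nonneg_left h1 ha)
          (by simpa using mul_le_mul_of_nonneg_left h2 hb)
    intro y hy
    rw [Set.mem_sub] at hy
    obtain ⟨a, ha, b, hb, rfl⟩ := hy
    rw [Set.mem_add] at ha
    obtain ⟨p, hp, k, hk, rfl⟩ := ha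
    rw [Set.mem_singleton_iff] at hb
    subst hb
    have hslast : (t - ε • (Pi.single (Fin.last q) (1:ℝ) : Fin (q+1) → ℝ)) (Fin.last q)
        = t (Fin.last q) - ε := by simp
    rw [phi, wfun_sub_single, hslast, dotProduct_sub, dotProduct_add,
      dotProduct_smul, wfun_dot_c T hT c hTc]
    have h1 : t (Fin.last q) ≤ wfun T t ⬝ᵥ p := hhull hp
    have h2 : 0 ≤ wfun T t ⬝ᵥ k := ht1 k hk
    simp only [smul_eq_mul, mul_one]
    linarith
  · -- D_ε ⊆ D
    intro t ht
    simp only [Set.mem_setOf_eq] at ht ⊢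
    have key : ∀ x ∈ 𝒳, ∀ k ∈ C,
        0 ≤ wfun T t ⬝ᵥ Γ x + wfun T t ⬝ᵥ k - t (Fin.last q) := by
      intro x hx k hk
      have hy : Γ x + k ∈ Γ '' 𝒳 + C := Set.add_mem_add ⟨x, hx, rfl⟩ hk
      have := ht _ (hcover hy)
      simpa [phi, dotProduct_add] using this
    obtain ⟨xb, hxb⟩ := hXbar_ne
    have hxb𝒳 : xb ∈ 𝒳 := hXbar_sub hxb
    constructor
    · intro k hk
      by_contra hneg
      push_neg at hneg
      set A : ℝ := wfun T t ⬝ᵥ Γ xb - t (Fin.last q) with hA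
      have hA0 : 0 ≤ A := by
        have := key xb hxb𝒳 0 h0C
        simpa [hA] using this
      set B : ℝ := wfun T t ⬝ᵥ k with hB
      have hBneg : B < 0 := hneg
      set r : ℝ := (A + 1) / (-B) with hr
      have hr0 : 0 ≤ r := div_nonneg (by linarith) (by linarith)
      have hBne : B ≠ 0 := ne_of_lt hBneg
      have hrB : r * B = -(A + 1) := by
        have h2 : r * -B = A + 1 := div_mul_cancel₀ _ (neg_ne_zero.mpr hBne)
        rw [mul_neg] at h2
        linarith
      have := key xb hxb𝒳 (r • k) (hCcone k hk r hr0)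
      rw [dotProduct_smul] at this
      simp only [smul_eq_mul, ← hB, ← hA] at this
      nlinarith
    · intro x hx
      have := key x hx 0 h0C
      simp only [dotProduct_zero, add_zero] at this
      linarith
end

section
/- Existence of finite ε-solutions: under the assumptions that 𝒳 is compact, Γ continuous, C a solid pointed polyhedral cone and c ∈ int C, for every ε > 0 there exists a nonempty finite set 𝒳̂ ⊆ 𝒳 of minimizers such that conv Γ(𝒳̂) + C − ε{c} ⊇ P = Γ(𝒳) + C. -/
open Set Pointwise Matrix

/-- Existence of finite `ε`-solutions: if `𝒳` is compact, `Γ` continuous, `C` a solid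
pointed polyhedral cone and `c ∈ int C`, then for every `ε > 0` there is a nonempty
finite set `𝒳̂ ⊆ 𝒳` of minimizers with `conv Γ(𝒳̂) + C − ε{c} ⊇ P = Γ(𝒳) + C`. -/
theorem exists_finite_eps_solution {n q J : ℕ}
    (C : Set (Fin q → ℝ))
    (Z : Matrix (Fin q) (Fin J) ℝ)
    (hC : C = {y : Fin q → ℝ | ∀ j, 0 ≤ (Zᵀ *ᵥ y) j})
    (hCpointed : ∀ x ∈ C, -x ∈ C → x = 0)
    (hCsolid : (interior C).Nonempty)
    (c : Fin q → ℝ) (hc : c ∈ interior C)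
    (𝒳 : Set (Fin n → ℝ)) (h𝒳ne : 𝒳.Nonempty) (h𝒳compact : IsCompact 𝒳)
    (Γ : (Fin n → ℝ) → Fin q → ℝ) (hΓ : ContinuousOn Γ 𝒳)
    (ε : ℝ) (hε : 0 < ε) :
    ∃ Xhat : Finset (Fin n → ℝ), Xhat.Nonempty ∧
      (↑Xhat : Set (Fin n → ℝ)) ⊆ 𝒳 ∧
      (∀ x ∈ Xhat, ({Γ x} - (C \ {0})) ∩ (Γ '' 𝒳) = ∅) ∧
      Γ '' 𝒳 + C ⊆
        convexHull ℝ (Γ '' (↑Xhat : Set (Fin n → ℝ))) + C - ({ε • c} : Set (Fin q → ℝ)) := by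
  classical
  -- basic facts about C
  have hC0 : (0 : Fin q → ℝ) ∈ C := by
    rw [hC]; intro j; simp [Matrix.mulVec_zero]
  have hCadd : ∀ y ∈ C, ∀ z ∈ C, y + z ∈ C := by
    intro y hy z hz
    rw [hC] at hy hz ⊢
    intro j
    rw [Matrix.mulVec_add]
    exact add_nonneg (hy j) (hz j)
  have hCsmul : ∀ (t : ℝ), 0 ≤ t → ∀ y ∈ C, t • y ∈ C := by
    intro t ht y hy
    rw [hC] at hy ⊢
    intro j
    rw [Matrix.mulVec_smul]
    exact mul_nonneg ht (hy j)
  -- the scalarizing functional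
  set φ : (Fin q → ℝ) → ℝ := fun y => ∑ j, (Zᵀ *ᵥ y) j with hφ
  have hφcont : Continuous φ := by
    have h1 : Continuous (fun y : Fin q → ℝ => Zᵀ *ᵥ y) :=
      LinearMap.continuous_of_finiteDimensional Zᵀ.mulVecLin
    exact continuous_finset_sum _ fun j _ => (continuous_apply j).comp h1
  have hφsub : ∀ v w, φ (v - w) = φ v - φ w := by
    intro v w
    simp only [hφ, Matrix.mulVec_sub, Pi.sub_apply, Finset.sum_sub_distrib]
  have hφpos : ∀ y ∈ C, 0 ≤ φ y := by
    intro y hy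
    rw [hC] at hy
    exact Finset.sum_nonneg fun j _ => hy j
  have hφstrict : ∀ y ∈ C, φ y = 0 → y = 0 := by
    intro y hy h0
    rw [hC] at hy
    have hall : ∀ j ∈ Finset.univ, (Zᵀ *ᵥ y) j = 0 :=
      (Finset.sum_eq_zero_iff_of_nonneg (fun j _ => hy j)).mp h0
    refine hCpointed y (by rw [hC]; exact fun j => hy j) ?_
    rw [hC]
    intro j
    rw [Matrix.mulVec_neg]
    simp [hall j (Finset.mem_univ j)]
  -- interior facts
  have hint_add : ∀ u ∈ interior C, ∀ d ∈ C, u + d ∈ interior C := by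
    intro u hu d hd
    have hopen : IsOpen (interior C + C) := isOpen_interior.add_right
    have hsub : interior C + C ⊆ C := by
      rintro _ ⟨a, ha, b, hb, rfl⟩
      exact hCadd a (interior_subset ha) b hb
    exact interior_maximal hsub hopen (add_mem_add hu hd)
  have hεc : ε • c ∈ interior C := by
    have hopen : IsOpen (ε • interior C) := (isOpenMap_smul₀ hε.ne' _ isOpen_interior)
    have hsub : ε • interior C ⊆ C := by
      rintro _ ⟨a, ha, rfl⟩
      exact hCsmul ε hε.le a (interior_subset ha)
    exact interior_maximal hsub hopen ⟨c, hc, rfl⟩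
  have hCclosed : IsClosed C := by
    have h1 : Continuous (fun y : Fin q → ℝ => Zᵀ *ᵥ y) :=
      LinearMap.continuous_of_finiteDimensional Zᵀ.mulVecLin
    rw [hC]
    have : {y : Fin q → ℝ | ∀ j, 0 ≤ (Zᵀ *ᵥ y) j} = ⋂ j, {y | 0 ≤ (Zᵀ *ᵥ y) j} := by
      ext y; simp
    rw [this]
    exact isClosed_iInter fun j =>
      isClosed_le continuous_const ((continuous_apply j).comp h1)
  -- the compact image
  set K : Set (Fin q → ℝ) := Γ '' 𝒳 with hK
  have hKcompact : IsCompact K := h𝒳compact.image_of_continuousOn hΓ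
  have hKne : K.Nonempty := h𝒳ne.image Γ
  -- minimal points dominate every point
  have h_min : ∀ a ∈ K, ∃ v ∈ K, a - v ∈ C ∧ ∀ w ∈ K, v - w ∈ C → v = w := by
    intro a ha
    set S : Set (Fin q → ℝ) := K ∩ {v | a - v ∈ C} with hS
    have hSclosed : IsClosed {v : Fin q → ℝ | a - v ∈ C} :=
      hCclosed.preimage (continuous_const.sub continuous_id)
    have hScompact : IsCompact S := hKcompact.inter_right hSclosed
    have hSne : S.Nonempty := ⟨a, ha, by simp [hC0]⟩
    obtain ⟨v, hvS, hvmin⟩ := hScompact.exists_isMinOn hSne hφcont.continuousOn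
    refine ⟨v, hvS.1, hvS.2, ?_⟩
    intro w hw hvw
    have hwS : w ∈ S := ⟨hw, by
      have := hCadd _ hvS.2 _ hvw
      simpa using this⟩
    have h1 : φ v ≤ φ w := hvmin hwS
    have h2 : 0 ≤ φ (v - w) := hφpos _ hvw
    rw [hφsub] at h2
    have : φ (v - w) = 0 := by rw [hφsub]; linarith
    exact sub_eq_zero.mp (hφstrict _ hvw this)
  -- covering argument
  set M : Set (Fin q → ℝ) := {v ∈ K | ∀ w ∈ K, v - w ∈ C → v = w} with hM
  set U : (Fin q → ℝ) → Set (Fin q → ℝ) :=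
    fun v => {u | u - v + ε • c ∈ interior C} with hU
  have hUopen : ∀ v, IsOpen (U v) := by
    intro v
    exact isOpen_interior.preimage ((continuous_id.sub continuous_const).add continuous_const)
  have hcover : K ⊆ ⋃ v ∈ M, U v := by
    intro a ha
    obtain ⟨v, hvK, havC, hvmin⟩ := h_min a ha
    refine mem_iUnion₂.mpr ⟨v, ⟨hvK, hvmin⟩, ?_⟩
    have : ε • c + (a - v) ∈ interior C := hint_add _ hεc _ havC
    simpa [hU, add_comm] using this
  obtain ⟨s, hsM, hsfin, hscov⟩ :=
    hKcompact.elim_finite_subcover_image (fun v _ => hUopen v) hcover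
  -- choose preimages
  have hpre : ∀ v : Fin q → ℝ, ∃ x, v ∈ K → x ∈ 𝒳 ∧ Γ x = v := by
    intro v
    by_cases h : v ∈ K
    · obtain ⟨x, hx, hxv⟩ := h
      exact ⟨x, fun _ => ⟨hx, hxv⟩⟩
    · exact ⟨h𝒳ne.choose, fun hv => absurd hv h⟩
  choose g hg using hpre
  refine ⟨hsfin.toFinset.image g, ?_, ?_, ?_, ?_⟩
  · -- nonempty
    obtain ⟨a, ha⟩ := hKne
    obtain ⟨v, hv, -⟩ := mem_iUnion₂.mp (hscov ha)
    exact ⟨g v, Finset.mem_image_of_mem g (hsfin.mem_toFinset.mpr hv)⟩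
  · -- subset of 𝒳
    intro x hx
    simp only [Finset.coe_image, Set.Finite.coe_toFinset, mem_image] at hx
    obtain ⟨v, hv, rfl⟩ := hx
    exact (hg v (hsM hv).1).1
  · -- minimizer property
    intro x hx
    simp only [Finset.mem_image, Set.Finite.mem_toFinset] at hx
    obtain ⟨v, hv, rfl⟩ := hx
    obtain ⟨hvK, hvmin⟩ := hsM hv
    have hΓgv : Γ (g v) = v := (hg v hvK).2
    ext u
    simp only [mem_inter_iff, mem_empty_iff_false, iff_false, not_and]
    rintro ⟨p, hp, d, hd, rfl⟩ hu
    rw [mem_singleton_iff] at hp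
    subst hp
    have : Γ (g v) - (Γ (g v) - d) ∈ C := by simpa using hd.1
    have heq := hvmin _ (by rwa [hΓgv] at hu) (by rwa [hΓgv] at this)
    apply hd.2
    have h := heq
    simp only at h
    rw [eq_sub_iff_add_eq] at h
    simpa using add_eq_left.mp h
  · -- the inclusion
    rintro w ⟨a, ha, d, hd, rfl⟩
    obtain ⟨v, hv, hav⟩ := mem_iUnion₂.mp (hscov ha)
    have hvK : v ∈ K := (hsM hv).1
    have hΓgv : Γ (g v) = v := (hg v hvK).2
    have he : a - v + ε • c ∈ C := interior_subset hav
    have hvconv : v ∈ convexHull ℝ (Γ '' (↑(hsfin.toFinset.image g) : Set (Fin n → ℝ))) := by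
      apply subset_convexHull
      exact ⟨g v, by
        simp only [Finset.coe_image, Set.Finite.coe_toFinset]
        exact ⟨v, hv, rfl⟩, hΓgv⟩
    have key : a + d = (v + (a - v + ε • c + d)) - ε • c := by abel
    show a + d ∈ _
    rw [key]
    exact Set.sub_mem_sub (Set.add_mem_add hvconv (hCadd _ he _ hd)) rfl
end
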